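/- (Remark 2.) Let s* < 0 and let F be a non-degenerate bi-s*-concave distribution function with derivative f = F′ on J(F). Then T₁(F) := sup_{x ∈ J(F)} f(x)/F(x)^{1−s*} equals the limit of f(x)/F(x)^{1−s*} as x decreases to inf J(F), and T₁(F) > 0; moreover, if inf J(F) > −∞ then T₁(F) = +∞. Analogously, T₂(F) := sup_{x ∈ J(F)} f(x)/(1−F(x))^{1−s*} equals the limit of f(x)/(1−F(x))^{1−s*} as x increases to sup J(F), T₂(F) > 0, and if sup J(F) < +∞ then T₂(F) = +∞. -/

import Mathlib

open Set MeasureTheory Filter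
open scoped NNReal ENNReal

/-- A (cumulative) distribution function on `ℝ`: nondecreasing, `[0,1]`-valued,
right-continuous, with limit `0` at `-∞` and `1` at `+∞`. -/
def IsDistFun (F : ℝ → ℝ) : Prop :=
  Monotone F ∧ (∀ x, 0 ≤ F x ∧ F x ≤ 1) ∧
  (∀ x, ContinuousWithinAt F (Ici x) x) ∧
  Tendsto F atBot (nhds 0) ∧ Tendsto F atTop (nhds 1)

/-- `F` is non-degenerate: it takes a value strictly between 0 and 1. -/
def NonDeg (F : ℝ → ℝ) : Prop := ∃ x, 0 < F x ∧ F x < 1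

/-- `J(F) = {x : 0 < F x < 1}`. -/
def JSet (F : ℝ → ℝ) : Set ℝ := {x | 0 < F x ∧ F x < 1}

/-- `F` is bi-`s*`-concave: `F` is continuous on `ℝ` and, on `J(F)`,
for `s* < 0` both `F ^ s*` and `(1 - F) ^ s*` are convex; for `s* = 0` both
`log F` and `log (1 - F)` are concave; for `s* > 0` both `F ^ s*` and
`(1 - F) ^ s*` are concave. -/
def IsBiSStarConcave (s : ℝ) (F : ℝ → ℝ) : Prop :=
  Continuous F ∧
  (s < 0 → ConvexOn ℝ (JSet F) (fun x => F x ^ s) ∧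
    ConvexOn ℝ (JSet F) (fun x => (1 - F x) ^ s)) ∧
  (s = 0 → ConcaveOn ℝ (JSet F) (fun x => Real.log (F x)) ∧
    ConcaveOn ℝ (JSet F) (fun x => Real.log (1 - F x))) ∧
  (0 < s → ConcaveOn ℝ (JSet F) (fun x => F x ^ s) ∧
    ConcaveOn ℝ (JSet F) (fun x => (1 - F x) ^ s))

open Classical in
/-- Filter describing `x` decreasing to `inf J` within `J` (`atBot` within `J` when `J` is
unbounded below). -/
noncomputable def leftEndFilter (J : Set ℝ) : Filter ℝ :=
  if BddBelow J then nhdsWithin (sInf J) J else Filter.atBot ⊓ Filter.principal J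

open Classical in
/-- Filter describing `x` increasing to `sup J` within `J` (`atTop` within `J` when `J` is
unbounded above). -/
noncomputable def rightEndFilter (J : Set ℝ) : Filter ℝ :=
  if BddAbove J then nhdsWithin (sSup J) J else Filter.atTop ⊓ Filter.principal J


/-! On `J(F)` the derivative of the convex function `F ^ s` is `s * f / F ^ (1 - s)`, so
`f / F ^ (1 - s)` is nonincreasing there and its supremum is its limit at the left end of `J(F)`.
If `a = inf J(F)` is finite then `F a = 0`; a bound `f / F ^ (1 - s) ≤ M` would bound the
derivative of `F ^ s` below by `s * M`, so `F ^ s` would stay bounded near `a` and `F a > 0`.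
If `J(F)` is unbounded below, `F` increases somewhere on it and the mean value theorem gives a
point where `f > 0`. The statements about `1 - F` follow by applying all this to
`x ↦ 1 - F (-x)`. -/

open Topology

noncomputable def T₁ (s : ℝ) (F f : ℝ → ℝ) : ℝ≥0∞ :=
  ⨆ x ∈ JSet F, ENNReal.ofReal (f x / F x ^ (1 - s))

/-- The distribution function of `-X` when `F` is that of `X`, up to its values at atoms. -/
def reflectCDF (F : ℝ → ℝ) (x : ℝ) : ℝ := 1 - F (-x)

lemma isOpen_JSet {F : ℝ → ℝ} (hF : Continuous F) : IsOpen (JSet F) :=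
  isOpen_Ioo.preimage hF

lemma ordConnected_JSet {F : ℝ → ℝ} (hF : Monotone F) : (JSet F).OrdConnected :=
  ordConnected_Ioo.preimage_mono hF

lemma IsOpen.csInf_lt {J : Set ℝ} (hJ : IsOpen J) (hb : BddBelow J) {x : ℝ} (hx : x ∈ J) :
    sInf J < x := by
  obtain ⟨y, hyJ, hyx⟩ : ∃ y ∈ J, y < x :=
    (Eventually.and (nhdsWithin_le_nhds (hJ.mem_nhds hx) : ∀ᶠ y in 𝓝[<] x, y ∈ J)
      self_mem_nhdsWithin).exists
  exact (csInf_le hb hyJ).trans_lt hyx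

lemma leftEndFilter_le_principal (J : Set ℝ) : leftEndFilter J ≤ 𝓟 J := by
  unfold leftEndFilter
  split_ifs <;> exact inf_le_right

lemma eventually_leftEndFilter_le {J : Set ℝ} (hJ : IsOpen J) {x : ℝ} (hx : x ∈ J) :
    ∀ᶠ y in leftEndFilter J, y ≤ x := by
  unfold leftEndFilter
  split_ifs with hb
  · exact ((eventually_lt_nhds (hJ.csInf_lt hb hx)).mono fun _ => le_of_lt).filter_mono
      nhdsWithin_le_nhds
  · exact (eventually_le_atBot x).filter_mono inf_le_left

lemma tendsto_leftEndFilter_biSup {J : Set ℝ} (hJ : IsOpen J) {h : ℝ → ℝ≥0∞}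
    (hh : AntitoneOn h J) : Tendsto h (leftEndFilter J) (𝓝 (⨆ x ∈ J, h x)) := by
  have hmem : ∀ᶠ y in leftEndFilter J, y ∈ J := leftEndFilter_le_principal J (mem_principal_self J)
  refine tendsto_order.2 ⟨fun l hl => ?_, fun u hu => ?_⟩
  · obtain ⟨x, hx, hlx⟩ := lt_biSup_iff.mp hl
    filter_upwards [eventually_leftEndFilter_le hJ hx, hmem] with y hyx hy
    exact hlx.trans_le (hh hy hx hyx)
  · filter_upwards [hmem] with y hy
    exact (le_biSup h hy).trans_lt hu

lemma tendsto_neg_rightEndFilter {J : Set ℝ} (hne : J.Nonempty) :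
    Tendsto Neg.neg (rightEndFilter J) (leftEndFilter (-J)) := by
  have hJ : Tendsto Neg.neg (𝓟 J) (𝓟 (-J)) :=
    tendsto_principal_principal.2 fun x hx => neg_mem_neg.mpr hx
  unfold rightEndFilter leftEndFilter
  by_cases hb : BddAbove J
  · rw [if_pos hb, if_pos (bddBelow_neg.mpr hb), ((isLUB_csSup hne hb).neg).csInf_eq hne.neg]
    exact (continuous_neg.tendsto _).inf hJ
  · rw [if_neg hb, if_neg (mt bddBelow_neg.mp hb)]
    exact tendsto_neg_atTop_atBot.inf hJ

section LeftEnd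

variable {s : ℝ} {F f : ℝ → ℝ}

lemma hasDerivAt_rpow_of_mem_JSet (hderiv : ∀ x ∈ JSet F, HasDerivAt F (f x) x) (s : ℝ)
    {x : ℝ} (hx : x ∈ JSet F) : HasDerivAt (fun y => F y ^ s) (s * (f x / F x ^ (1 - s))) x := by
  convert (hderiv x hx).rpow_const (p := s) (Or.inl hx.1.ne') using 1
  rw [show 1 - s = -(s - 1) by ring, Real.rpow_neg hx.1.le, div_inv_eq_mul]
  ring

lemma antitoneOn_div_rpow (hs : s < 0) (hconv : ConvexOn ℝ (JSet F) fun x => F x ^ s)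
    (hderiv : ∀ x ∈ JSet F, HasDerivAt F (f x) x) :
    AntitoneOn (fun x => f x / F x ^ (1 - s)) (JSet F) := by
  intro x hx y hy hxy
  rcases hxy.eq_or_lt with rfl | hlt
  · rfl
  have hslope :=
    (hconv.le_slope_of_hasDerivAt hx hy hlt (hasDerivAt_rpow_of_mem_JSet hderiv s hx)).trans
      (hconv.slope_le_of_hasDerivAt hx hy hlt (hasDerivAt_rpow_of_mem_JSet hderiv s hy))
  exact (mul_le_mul_left_of_neg hs).mp hslope

lemma rpow_le_sub_of_div_rpow_le (hs : s ≤ 0) (hconv : ConvexOn ℝ (JSet F) fun x => F x ^ s)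
    (hderiv : ∀ x ∈ JSet F, HasDerivAt F (f x) x) {x y : ℝ} (hx : x ∈ JSet F) (hy : y ∈ JSet F)
    (hxy : x < y) {M : ℝ} (hM : f x / F x ^ (1 - s) ≤ M) :
    F x ^ s ≤ F y ^ s - s * M * (y - x) := by
  have hslope := hconv.le_slope_of_hasDerivAt hx hy hxy (hasDerivAt_rpow_of_mem_JSet hderiv s hx)
  rw [slope_def_field, le_div_iff₀ (sub_pos.2 hxy)] at hslope
  nlinarith [mul_le_mul_of_nonpos_left hM hs, sub_pos.2 hxy]

lemma exists_lt_div_rpow_of_bddBelow (hs : s < 0) (hmono : Monotone F) (hcont : Continuous F)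
    (hconv : ConvexOn ℝ (JSet F) fun x => F x ^ s) (hderiv : ∀ x ∈ JSet F, HasDerivAt F (f x) x)
    (hne : (JSet F).Nonempty) (hbdd : BddBelow (JSet F)) {M : ℝ} (hM : 0 ≤ M) :
    ∃ x ∈ JSet F, M < f x / F x ^ (1 - s) := by
  by_contra! hle
  obtain ⟨y, hy⟩ := hne
  have hJ := isOpen_JSet hcont
  set a := sInf (JSet F)
  have hay : a < y := hJ.csInf_lt hbdd hy
  set B := F y ^ s - s * M * (y - a)
  have hB : 0 < B := by
    have := Real.rpow_pos_of_pos hy.1 s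
    nlinarith [mul_nonneg (mul_nonneg (neg_nonneg.2 hs.le) hM) (sub_pos.2 hay).le]
  have hlower : ∀ x ∈ JSet F, x < y → B ^ s⁻¹ ≤ F x := fun x hx hxy => by
    rw [Real.rpow_inv_le_iff_of_neg hB hx.1 hs]
    calc F x ^ s ≤ F y ^ s - s * M * (y - x) :=
          rpow_le_sub_of_div_rpow_le hs.le hconv hderiv hx hy hxy (hle x hx)
      _ ≤ B := by nlinarith [csInf_le hbdd hx, mul_nonneg (neg_nonneg.2 hs.le) hM]
  -- `F a ≥ B ^ s⁻¹ > 0` by continuity from the right, so `a` would lie in the open set `J`.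
  have : NeBot (𝓝[JSet F] a) := mem_closure_iff_nhdsWithin_neBot.1 (csInf_mem_closure ⟨y, hy⟩ hbdd)
  have hFa : B ^ s⁻¹ ≤ F a := ge_of_tendsto (hcont.continuousWithinAt (s := JSet F) (x := a)) <| by
    filter_upwards [self_mem_nhdsWithin, nhdsWithin_le_nhds (eventually_lt_nhds hay)] with x hx hxy
    exact hlower x hx hxy
  have haJ : a ∈ JSet F := ⟨(Real.rpow_pos_of_pos hB _).trans_le hFa, (hmono hay.le).trans_lt hy.2⟩
  exact (hJ.csInf_lt hbdd haJ).false

lemma exists_pos_deriv_of_not_bddBelow (hmono : Monotone F) (hcont : Continuous F)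
    (hbot : Tendsto F atBot (𝓝 0)) (hderiv : ∀ x ∈ JSet F, HasDerivAt F (f x) x)
    (hne : (JSet F).Nonempty) (hbdd : ¬BddBelow (JSet F)) : ∃ x ∈ JSet F, 0 < f x := by
  obtain ⟨y, hy⟩ := hne
  obtain ⟨N, hN⟩ := eventually_atBot.mp (hbot.eventually (eventually_lt_nhds hy.1))
  obtain ⟨x, hx, hxlt⟩ := not_bddBelow_iff.mp hbdd (min N y)
  have hxy : x < y := hxlt.trans_le (min_le_right _ _)
  have hIoo : Ioo x y ⊆ JSet F := Ioo_subset_Icc_self.trans ((ordConnected_JSet hmono).out hx hy)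
  obtain ⟨c, hc, hfc⟩ := exists_hasDerivAt_eq_slope F f hxy hcont.continuousOn
    fun z hz => hderiv z (hIoo hz)
  refine ⟨c, hIoo hc, hfc ▸ div_pos (sub_pos.2 ?_) (sub_pos.2 hxy)⟩
  exact hN x (hxlt.le.trans (min_le_left _ _))

lemma tendsto_leftEndFilter_T₁ (hs : s < 0) (hcont : Continuous F)
    (hconv : ConvexOn ℝ (JSet F) fun x => F x ^ s) (hderiv : ∀ x ∈ JSet F, HasDerivAt F (f x) x) :
    Tendsto (fun x => ENNReal.ofReal (f x / F x ^ (1 - s))) (leftEndFilter (JSet F))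
      (𝓝 (T₁ s F f)) :=
  tendsto_leftEndFilter_biSup (isOpen_JSet hcont)
    (ENNReal.ofReal_mono.comp_antitoneOn (antitoneOn_div_rpow hs hconv hderiv))

lemma T₁_eq_top_of_bddBelow (hs : s < 0) (hmono : Monotone F) (hcont : Continuous F)
    (hconv : ConvexOn ℝ (JSet F) fun x => F x ^ s) (hderiv : ∀ x ∈ JSet F, HasDerivAt F (f x) x)
    (hne : (JSet F).Nonempty) (hbdd : BddBelow (JSet F)) : T₁ s F f = ⊤ := by
  refine ENNReal.eq_top_of_forall_nnreal_le fun r => ?_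
  obtain ⟨x, hx, hrx⟩ :=
    exists_lt_div_rpow_of_bddBelow hs hmono hcont hconv hderiv hne hbdd r.coe_nonneg
  calc (r : ℝ≥0∞) = ENNReal.ofReal r := (ENNReal.ofReal_coe_nnreal).symm
    _ ≤ ENNReal.ofReal (f x / F x ^ (1 - s)) := ENNReal.ofReal_le_ofReal hrx.le
    _ ≤ T₁ s F f := le_biSup (fun x => ENNReal.ofReal (f x / F x ^ (1 - s))) hx

lemma T₁_pos (hs : s < 0) (hmono : Monotone F) (hcont : Continuous F)
    (hbot : Tendsto F atBot (𝓝 0)) (hconv : ConvexOn ℝ (JSet F) fun x => F x ^ s)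
    (hderiv : ∀ x ∈ JSet F, HasDerivAt F (f x) x) (hne : (JSet F).Nonempty) : 0 < T₁ s F f := by
  by_cases hbdd : BddBelow (JSet F)
  · simp [T₁_eq_top_of_bddBelow hs hmono hcont hconv hderiv hne hbdd]
  obtain ⟨x, hx, hfx⟩ := exists_pos_deriv_of_not_bddBelow hmono hcont hbot hderiv hne hbdd
  refine lt_of_lt_of_le ?_ (le_biSup (fun x => ENNReal.ofReal (f x / F x ^ (1 - s))) hx)
  exact ENNReal.ofReal_pos.mpr (div_pos hfx (Real.rpow_pos_of_pos hx.1 _))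

end LeftEnd

section Reflection

variable {F : ℝ → ℝ}

lemma mem_JSet_reflectCDF {x : ℝ} : x ∈ JSet (reflectCDF F) ↔ -x ∈ JSet F := by
  simp only [JSet, reflectCDF, mem_ofPred_eq]
  constructor <;> rintro ⟨h₀, h₁⟩ <;> constructor <;> linarith

lemma JSet_reflectCDF : JSet (reflectCDF F) = -JSet F :=
  Set.ext fun _ => mem_JSet_reflectCDF

lemma Monotone.reflectCDF (hF : Monotone F) : Monotone (reflectCDF F) :=
  fun _ _ hxy => sub_le_sub_left (hF (neg_le_neg hxy)) 1

lemma Continuous.reflectCDF (hF : Continuous F) : Continuous (reflectCDF F) :=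
  continuous_const.sub (hF.comp continuous_neg)

lemma tendsto_reflectCDF_atBot (hF : Tendsto F atTop (𝓝 1)) :
    Tendsto (reflectCDF F) atBot (𝓝 0) := by
  have h := (tendsto_const_nhds (x := (1 : ℝ))).sub (hF.comp tendsto_neg_atBot_atTop)
  rwa [sub_self] at h

lemma ConvexOn.reflectCDF {s : ℝ} (hconv : ConvexOn ℝ (JSet F) fun x => (1 - F x) ^ s) :
    ConvexOn ℝ (JSet (reflectCDF F)) fun x => reflectCDF F x ^ s := by
  rw [JSet_reflectCDF]
  exact hconv.comp_linearMap (-LinearMap.id)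

lemma hasDerivAt_reflectCDF {f : ℝ → ℝ} (hderiv : ∀ x ∈ JSet F, HasDerivAt F (f x) x) :
    ∀ x ∈ JSet (reflectCDF F), HasDerivAt (reflectCDF F) (f (-x)) x := by
  intro x hx
  unfold reflectCDF
  simpa using ((hderiv (-x) (mem_JSet_reflectCDF.1 hx)).comp x (hasDerivAt_neg x)).const_sub 1

lemma T₁_reflectCDF (s : ℝ) (f : ℝ → ℝ) :
    T₁ s (reflectCDF F) (fun x => f (-x)) =
      ⨆ x ∈ JSet F, ENNReal.ofReal (f x / (1 - F x) ^ (1 - s)) := by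
  rw [T₁, JSet_reflectCDF, ← image_neg_eq_neg, iSup_image]
  simp [reflectCDF]

end Reflection

/-- Remark 2: for a non-degenerate bi-`s*`-concave `F` with `s* < 0` and
derivative `f` on `J(F)`, `T₁(F) = sup_{J(F)} f / F ^ (1 - s*)` is the limit of
`f / F ^ (1 - s*)` as `x` decreases to `inf J(F)`, it is strictly positive, and it is infinite
whenever `inf J(F) > -∞`; analogously for `T₂(F) = sup_{J(F)} f / (1 - F) ^ (1 - s*)` at the
right endpoint. -/
theorem remark2_T1_T2
    (s : ℝ) (hs : s < 0)
    (F : ℝ → ℝ) (hF : IsDistFun F) (hnd : NonDeg F)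
    (hbi : IsBiSStarConcave s F)
    (f : ℝ → ℝ) (hderiv : ∀ x ∈ JSet F, HasDerivAt F (f x) x) :
    (Tendsto (fun x => ENNReal.ofReal (f x / F x ^ (1 - s))) (leftEndFilter (JSet F))
        (nhds (⨆ x ∈ JSet F, ENNReal.ofReal (f x / F x ^ (1 - s)))) ∧
      0 < ⨆ x ∈ JSet F, ENNReal.ofReal (f x / F x ^ (1 - s)) ∧
      (BddBelow (JSet F) →
        (⨆ x ∈ JSet F, ENNReal.ofReal (f x / F x ^ (1 - s))) = ⊤)) ∧
    (Tendsto (fun x => ENNReal.ofReal (f x / (1 - F x) ^ (1 - s))) (rightEndFilter (JSet F))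
        (nhds (⨆ x ∈ JSet F, ENNReal.ofReal (f x / (1 - F x) ^ (1 - s)))) ∧
      0 < ⨆ x ∈ JSet F, ENNReal.ofReal (f x / (1 - F x) ^ (1 - s)) ∧
      (BddAbove (JSet F) →
        (⨆ x ∈ JSet F, ENNReal.ofReal (f x / (1 - F x) ^ (1 - s))) = ⊤)) := by
  obtain ⟨hmono, -, -, hbot, htop⟩ := hF
  obtain ⟨hcont, hconv, -⟩ := hbi
  obtain ⟨hconvF, hconv1F⟩ := hconv hs
  have hne : (JSet F).Nonempty := hnd
  refine ⟨⟨tendsto_leftEndFilter_T₁ hs hcont hconvF hderiv,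
    T₁_pos hs hmono hcont hbot hconvF hderiv hne,
    T₁_eq_top_of_bddBelow hs hmono hcont hconvF hderiv hne⟩, ?_⟩
  have hmonoG := hmono.reflectCDF
  have hcontG := hcont.reflectCDF
  have hconvG := hconv1F.reflectCDF
  have hderivG := hasDerivAt_reflectCDF hderiv
  have hneG : (JSet (reflectCDF F)).Nonempty := JSet_reflectCDF (F := F) ▸ hne.neg
  rw [← T₁_reflectCDF]
  refine ⟨?_, T₁_pos hs hmonoG hcontG (tendsto_reflectCDF_atBot htop) hconvG hderivG hneG,
    fun hbdd => T₁_eq_top_of_bddBelow hs hmonoG hcontG hconvG hderivG hneG ?_⟩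
  · have h := (tendsto_leftEndFilter_T₁ hs hcontG hconvG hderivG).comp
      (JSet_reflectCDF (F := F) ▸ tendsto_neg_rightEndFilter hne)
    simpa [Function.comp_def, reflectCDF] using h
  · rwa [JSet_reflectCDF, bddBelow_neg]
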